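/- arXiv:2602.15905 — 2 statements merged into one kernel-verified Lean document; each statement's English description precedes it below -/
import Mathlib

section
/- For all positive integers m and n with m > n ≥ 1, one has B_m > B_n, where B_n := (H_n + exp(H_n)·log(H_n))/n. -/
open Real Finset

/-- The n-th harmonic number `H_n = ∑_{j=1}^n 1/j` as a real number. -/
noncomputable def harmonicNum (n : ℕ) : ℝ := ∑ j ∈ Finset.range n, (1 : ℝ) / (j + 1)

/-- The sequence `B_n = (H_n + exp(H_n)·log(H_n))/n`. -/
noncomputable def B (n : ℕ) : ℝ :=
  (harmonicNum n + Real.exp (harmonicNum n) * Real.log (harmonicNum n)) / n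

lemma harmonicNum_succ (n : ℕ) : harmonicNum (n+1) = harmonicNum n + 1/(n+1) := by
  simp [harmonicNum, Finset.sum_range_succ]

lemma harmonicNum_one : harmonicNum 1 = 1 := by simp [harmonicNum]

lemma harmonicNum_two : harmonicNum 2 = 3/2 := by
  simp [harmonicNum, Finset.sum_range_succ]; norm_num

lemma harmonicNum_three : harmonicNum 3 = 11/6 := by
  simp [harmonicNum, Finset.sum_range_succ]; norm_num

lemma harmonicNum_four : harmonicNum 4 = 25/12 := by
  simp [harmonicNum, Finset.sum_range_succ]; norm_num

lemma harmonic_upper (m : ℕ) (hm : 4 ≤ m) :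
    harmonicNum m ≤ Real.log m + (25/12 - Real.log 4) := by
  induction m, hm using Nat.le_induction with
  | base => rw [harmonicNum_four]; norm_num
  | succ k hk ih =>
    rw [harmonicNum_succ]
    have hk0 : (0:ℝ) < k := by positivity
    have hk1 : (0:ℝ) < (k:ℝ) + 1 := by positivity
    have h1 : Real.log ((k:ℝ)/((k:ℝ)+1)) ≤ (k:ℝ)/((k:ℝ)+1) - 1 :=
      Real.log_le_sub_one_of_pos (by positivity)
    rw [Real.log_div (ne_of_gt hk0) (ne_of_gt hk1)] at h1
    have h2 : (k:ℝ)/((k:ℝ)+1) - 1 = -(1/((k:ℝ)+1)) := by field_simp; ring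
    rw [h2] at h1
    push_cast
    have h3 : Real.log ((k:ℝ)+1+1) = Real.log ((k:ℝ)+2) := by rw [show (k:ℝ)+1+1 = (k:ℝ)+2 by ring]
    linarith

lemma harmonic_lower (n : ℕ) (hn : 3 ≤ n) :
    Real.log ((n:ℝ)+1) + (11/6 - Real.log 4) ≤ harmonicNum n := by
  induction n, hn using Nat.le_induction with
  | base => rw [harmonicNum_three]; norm_num
  | succ k hk ih =>
    rw [harmonicNum_succ]
    have hk1 : (0:ℝ) < (k:ℝ) + 1 := by positivity
    have hk2 : (0:ℝ) < (k:ℝ) + 2 := by positivity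
    have h1 : Real.log (((k:ℝ)+2)/((k:ℝ)+1)) ≤ ((k:ℝ)+2)/((k:ℝ)+1) - 1 :=
      Real.log_le_sub_one_of_pos (by positivity)
    rw [Real.log_div (ne_of_gt hk2) (ne_of_gt hk1)] at h1
    have h2 : ((k:ℝ)+2)/((k:ℝ)+1) - 1 = 1/((k:ℝ)+1) := by field_simp; ring
    rw [h2] at h1
    push_cast
    have h3 : Real.log ((k:ℝ)+1+1) = Real.log ((k:ℝ)+2) := by rw [show (k:ℝ)+1+1 = (k:ℝ)+2 by ring]
    linarith



lemma exp_11_6 : (6:ℝ) ≤ Real.exp (11/6) := by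
  have h := Real.sum_le_exp_of_nonneg (x := 11/6) (by norm_num) 5
  have h2 : ∑ i ∈ Finset.range 5, ((11:ℝ)/6) ^ i / (i.factorial : ℝ) = 186985/31104 := by
    simp [Finset.sum_range_succ, Nat.factorial]
    norm_num
  rw [h2] at h
  linarith

lemma exp_3_2 : Real.exp (3/2) ≤ 4.4818 := by
  have h1 : Real.exp (3/2) * Real.exp (3/2) = Real.exp 3 := by
    rw [← Real.exp_add]; norm_num
  have h2 : Real.exp 3 = Real.exp 1 ^ 3 := by
    rw [← Real.exp_nat_mul]; norm_num
  have h3 := Real.exp_one_lt_d9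
  have h4 := Real.exp_pos 1
  have h5 := Real.exp_pos (3/2)
  have e2 : Real.exp 1 ^ 2 < 7.389057 := by nlinarith
  have e3 : Real.exp 1 ^ 3 < 20.0856 := by nlinarith
  nlinarith

lemma log_3_2_lb : (1:ℝ)/3 ≤ Real.log (3/2) := by
  have h : Real.log ((2:ℝ)/3) ≤ (2:ℝ)/3 - 1 := Real.log_le_sub_one_of_pos (by norm_num)
  rw [show (2:ℝ)/3 = ((3:ℝ)/2)⁻¹ by norm_num, Real.log_inv] at h
  linarith

lemma log_3_2_ub : Real.log (3/2) ≤ 0.44315 := by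
  have h1 : Real.log ((3:ℝ)/2) = Real.log 2 - Real.log (4/3) := by
    rw [show (3:ℝ)/2 = 2/(4/3) by norm_num, Real.log_div (by norm_num) (by norm_num)]
  have h2 : Real.log ((3:ℝ)/4) ≤ (3:ℝ)/4 - 1 := Real.log_le_sub_one_of_pos (by norm_num)
  rw [show (3:ℝ)/4 = ((4:ℝ)/3)⁻¹ by norm_num, Real.log_inv] at h2
  have h3 := Real.log_two_lt_d9
  rw [h1]
  linarith

lemma log_11_6_lb : 0.6022 ≤ Real.log (11/6) := by
  have h1 : Real.log ((11:ℝ)/6) = Real.log 2 - Real.log (12/11) := by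
    rw [show (11:ℝ)/6 = 2/(12/11) by norm_num, Real.log_div (by norm_num) (by norm_num)]
  have h2 : Real.log ((12:ℝ)/11) ≤ (12:ℝ)/11 - 1 := Real.log_le_sub_one_of_pos (by norm_num)
  have h3 := Real.log_two_gt_d9
  rw [h1]
  linarith

lemma log4_eq : Real.log 4 = 2 * Real.log 2 := by
  rw [show (4:ℝ) = 2^2 by norm_num, Real.log_pow]
  push_cast; ring

lemma cubic_le_exp {x : ℝ} (hx : 0 ≤ x) : 1 + x + x^2/2 + x^3/6 ≤ Real.exp x := by
  have h := Real.sum_le_exp_of_nonneg hx 4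
  have h2 : ∑ i ∈ Finset.range 4, x ^ i / (i.factorial : ℝ) = 1 + x + x^2/2 + x^3/6 := by
    simp [Finset.sum_range_succ, Nat.factorial]
    try ring
  rw [h2] at h
  exact h

lemma log_le_e_inv_mul {L : ℝ} (hL : 1 ≤ L) : Real.log L ≤ 0.36788 * L := by
  have hLpos : (0:ℝ) < L := by linarith
  have h1 : Real.log (L / Real.exp 1) ≤ L / Real.exp 1 - 1 :=
    Real.log_le_sub_one_of_pos (by positivity)
  rw [Real.log_div (ne_of_gt hLpos) (Real.exp_ne_zero 1), Real.log_exp] at h1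
  have h2 : Real.exp 1 > 2.7182818283 := by
    have := Real.exp_one_gt_d9; linarith
  have h3 : L / Real.exp 1 ≤ 0.36788 * L := by
    rw [div_le_iff₀ (Real.exp_pos 1)]
    nlinarith
  linarith



lemma polyQ {u : ℝ} (hu : 1.3862943 ≤ u) :
    (u + 0.69704)*(u + 0.69704 - 1) + 0.55182*(u + 0.69704)^2
      < 1.5*(1 + u + u^2/2 + u^3/6) - 0.375 := by
  nlinarith [mul_nonneg (sub_nonneg.2 hu) (sq_nonneg (u - 1.9)), sq_nonneg (u - 1.903),
    sq_nonneg (u - 1.9)]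

set_option maxHeartbeats 1000000 in
lemma core (M h H : ℝ) (hM4 : 4 ≤ M) (hH_eq : H = h + 1/M)
    (hlow : Real.log M + (11/6 - Real.log 4) ≤ h)
    (hupp : H ≤ Real.log M + (25/12 - Real.log 4)) :
    M*(h + Real.exp h*Real.log h) < (M-1)*(H + Real.exp H*Real.log H) := by
  have hMpos : (0:ℝ) < M := by linarith
  obtain ⟨u, hu_def⟩ : ∃ c : ℝ, c = Real.log M := ⟨_, rfl⟩
  obtain ⟨L, hL_def⟩ : ∃ c : ℝ, c = u + (25/12 - Real.log 4) := ⟨_, rfl⟩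
  have hlog4M : Real.log 4 ≤ u := by
    rw [hu_def]; exact Real.log_le_log (by norm_num) hM4
  have hlog4pos : (0:ℝ) < Real.log 4 := Real.log_pos (by norm_num)
  have hh116 : 11/6 ≤ h := by linarith
  have hhpos : (0:ℝ) < h := by linarith
  have h1M : (0:ℝ) < 1/M := by positivity
  have hHh : h < H := by rw [hH_eq]; linarith
  have hHpos : (0:ℝ) < H := by linarith
  have hupp' : H ≤ L := by rw [hL_def, hu_def]; exact hupp
  have hu' : 1.3862943 ≤ u := by
    have := Real.log_two_gt_d9
    rw [log4_eq] at hlog4M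
    linarith
  have hL_ge : 25/12 ≤ L := by
    rw [hL_def]
    linarith [hlog4M, hlog4pos]
  have hLpos : (0:ℝ) < L := by linarith
  have hhL : h ≤ L := by linarith
  -- exp h ≥ 1.5 M
  have hexp_h : 1.5 * M ≤ Real.exp h := by
    have h1 : Real.exp (Real.log M + (11/6 - Real.log 4)) ≤ Real.exp h := Real.exp_le_exp.2 hlow
    rw [Real.exp_add, Real.exp_sub, Real.exp_log hMpos,
      Real.exp_log (show (0:ℝ) < 4 by norm_num)] at h1
    nlinarith [exp_11_6]
  have hpoly : 1 + u + u^2/2 + u^3/6 ≤ M := by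
    have h2 := cubic_le_exp (show (0:ℝ) ≤ u by linarith)
    have h3 : Real.exp u = M := by rw [hu_def]; exact Real.exp_log hMpos
    rwa [h3] at h2
  have hLub : L ≤ u + 0.69704 := by
    have := Real.log_two_gt_d9
    rw [hL_def, log4_eq]
    linarith
  have hL1 : (1:ℝ) ≤ L := by linarith
  have hlogL := log_le_e_inv_mul hL1
  have hlogL0 : (0:ℝ) ≤ Real.log L := Real.log_nonneg hL1
  have hinvM : 1/M ≤ 1/4 := by
    rw [div_le_div_iff₀ hMpos (by norm_num)]; linarith
  have hQ : L*(L-1) < 1.5*(M - 1/M) - 1.5*(L*Real.log L) := by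
    have hP := polyQ hu'
    have c1 : L*(L-1) ≤ (u + 0.69704)*(u + 0.69704 - 1) :=
      mul_le_mul hLub (by linarith) (by linarith) (by linarith)
    have c2 : L*Real.log L ≤ L*(0.36788*L) := mul_le_mul_of_nonneg_left hlogL (le_of_lt hLpos)
    have c3 : L*L ≤ (u + 0.69704)*(u + 0.69704) :=
      mul_le_mul hLub hLub (by linarith) (by linarith)
    nlinarith [c1, c2, c3, hP]
  obtain ⟨c1, hc1_def⟩ : ∃ c : ℝ, c = (1 - 1/M^2)/L - (1/M)*Real.log L := ⟨_, rfl⟩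
  have hMc1 : L - 1 < 1.5*(M*c1) := by
    have hid : (1.5*(M*c1))*L = 1.5*(M - 1/M) - 1.5*(L*Real.log L) := by
      rw [hc1_def]
      field_simp
    have h2 : (L-1)*L < (1.5*(M*c1))*L := by rw [hid]; linarith
    exact lt_of_mul_lt_mul_right h2 (le_of_lt hLpos)
  have hc1pos : (0:ℝ) < c1 := by
    have hMc1pos : (0:ℝ) < M*c1 := by linarith
    rcases mul_pos_iff.mp hMc1pos with ⟨_, hc⟩ | ⟨hc, _⟩
    · exact hc
    · linarith
  obtain ⟨br, hbr_def⟩ : ∃ c : ℝ, c = (1 - 1/M^2)/H - (1/M)*Real.log h := ⟨_, rfl⟩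
  have hlogh_le : Real.log h ≤ Real.log L := Real.log_le_log hhpos hhL
  have hnum : (0:ℝ) ≤ 1 - 1/M^2 := by
    have : 1/M^2 ≤ 1/16 := by
      rw [div_le_div_iff₀ (by positivity) (by norm_num)]; nlinarith
    linarith
  have hbr_ge : c1 ≤ br := by
    have d1 : (1 - 1/M^2)/L ≤ (1 - 1/M^2)/H := by gcongr
    have d2 : (1/M)*Real.log h ≤ (1/M)*Real.log L :=
      mul_le_mul_of_nonneg_left hlogh_le (by positivity)
    rw [hc1_def, hbr_def]; linarith
  have hlogh0 : (0:ℝ) ≤ Real.log h := Real.log_nonneg (by linarith)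
  have hEh := Real.exp_pos h
  have hmain : H - 1 < Real.exp h * br := by
    have e1 : (1.5*M)*c1 ≤ Real.exp h * c1 :=
      mul_le_mul_of_nonneg_right hexp_h hc1pos.le
    have e2 : Real.exp h * c1 ≤ Real.exp h * br := mul_le_mul_of_nonneg_left hbr_ge hEh.le
    have e3 : H - 1 ≤ L - 1 := by linarith
    linarith
  have hHne : H ≠ 0 := ne_of_gt hHpos
  have hMne : M ≠ 0 := ne_of_gt hMpos
  have hlogH_lb : Real.log h + 1/(M*H) ≤ Real.log H := by
    have q1 : Real.log (h/H) ≤ h/H - 1 := Real.log_le_sub_one_of_pos (by positivity)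
    rw [Real.log_div (ne_of_gt hhpos) hHne] at q1
    have hdiff : H - h = 1/M := by rw [hH_eq]; ring
    have q2 : h/H - 1 = -(1/(M*H)) := by
      rw [show h = H - 1/M by linarith]
      field_simp
      ring
    rw [q2] at q1
    linarith
  have hexpH_eq : Real.exp H = Real.exp h * Real.exp (1/M) := by
    rw [hH_eq, Real.exp_add]
  have hexpt : 1 + 1/M ≤ Real.exp (1/M) := by
    have := Real.add_one_le_exp (1/M); linarith
  have hfac1 : (M - 1/M)*Real.exp h ≤ (M-1)*Real.exp H := by
    rw [hexpH_eq]
    have h0 : (M-1)*(1+1/M) = M - 1/M := by field_simp; ring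
    have h1 : M - 1/M ≤ (M-1)*Real.exp (1/M) := by
      rw [← h0]
      exact mul_le_mul_of_nonneg_left hexpt (by linarith)
    have h2 := mul_le_mul_of_nonneg_right h1 hEh.le
    nlinarith [h2]
  have hfac2 : (0:ℝ) ≤ Real.log h + 1/(M*H) := by positivity
  have hkey : (M - 1/M)*Real.exp h*(Real.log h + 1/(M*H)) ≤ (M-1)*Real.exp H*Real.log H :=
    mul_le_mul hfac1 hlogH_lb hfac2
      (mul_nonneg (by linarith) (Real.exp_pos H).le)
  have hexpand : (M - 1/M)*Real.exp h*(Real.log h + 1/(M*H))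
      = M*(Real.exp h*Real.log h) + Real.exp h * br := by
    rw [hbr_def]; field_simp; ring
  have hlin : (M-1)*H - M*h = 1 - H := by
    rw [hH_eq]; field_simp; ring
  linarith [hkey, hexpand, hmain, hlin]

lemma step_main (n : ℕ) (hn : 3 ≤ n) : B n < B (n+1) := by
  have hn3 : (3:ℝ) ≤ (n:ℝ) := by exact_mod_cast hn
  have hcast : ((n+1 : ℕ) : ℝ) = (n:ℝ) + 1 := by push_cast; ring
  have hH_eq : harmonicNum (n+1) = harmonicNum n + 1/((n:ℝ)+1) := harmonicNum_succ n
  have hupp := harmonic_upper (n+1) (by omega)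
  rw [hcast] at hupp
  rw [hH_eq] at hupp
  have hfinal := core ((n:ℝ)+1) (harmonicNum n) (harmonicNum (n+1)) (by linarith) hH_eq
    (harmonic_lower n hn) (by rw [hH_eq]; exact hupp)
  have hnpos : (0:ℝ) < (n:ℝ) := by linarith
  have hn1pos : (0:ℝ) < ((n+1:ℕ):ℝ) := by rw [hcast]; linarith
  unfold B
  rw [div_lt_div_iff₀ hnpos hn1pos, hcast]
  linarith [hfinal]


lemma step1 : B 1 < B 2 := by
  have e1 : B 1 = 1 := by
    unfold B
    rw [harmonicNum_one]
    norm_num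
  have e2 : B 2 = (3/2 + Real.exp (3/2) * Real.log (3/2))/2 := by
    unfold B
    rw [harmonicNum_two]
    norm_num
  rw [e1, e2, lt_div_iff₀ (by norm_num : (0:ℝ) < 2)]
  have hE : 5/2 ≤ Real.exp (3/2) := by
    have := Real.add_one_le_exp (3/2); linarith
  have hl := log_3_2_lb
  nlinarith

lemma step2 : B 2 < B 3 := by
  have e2 : B 2 = (3/2 + Real.exp (3/2) * Real.log (3/2))/2 := by
    unfold B
    rw [harmonicNum_two]
    norm_num
  have e3 : B 3 = (11/6 + Real.exp (11/6) * Real.log (11/6))/3 := by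
    unfold B
    rw [harmonicNum_three]
    norm_num
  rw [e2, e3, div_lt_div_iff₀ (by norm_num : (0:ℝ) < 2) (by norm_num : (0:ℝ) < 3)]
  have p1 : Real.exp (3/2) * Real.log (3/2) ≤ 4.4818 * 0.44315 :=
    mul_le_mul exp_3_2 log_3_2_ub (Real.log_nonneg (by norm_num)) (by norm_num)
  have p2 : (6:ℝ) * 0.6022 ≤ Real.exp (11/6) * Real.log (11/6) :=
    mul_le_mul exp_11_6 log_11_6_lb (by norm_num) (Real.exp_pos _).le
  linarith

lemma step_all (n : ℕ) (hn : 1 ≤ n) : B n < B (n+1) := by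
  obtain rfl | rfl | h3 : n = 1 ∨ n = 2 ∨ 3 ≤ n := by omega
  · exact step1
  · exact step2
  · exact step_main n h3


theorem B_lt_of_lt (m n : ℕ) (hn : 1 ≤ n) (hmn : n < m) :
    B n < B m := by
  induction m, hmn using Nat.le_induction with
  | base => exact step_all n hn
  | succ k hk ih => exact lt_trans ih (step_all k (by omega))
end

section
/- For every real x ≥ 1, exp(H(x)) ≥ x + 1. -/
open Real

/-- The digamma function `ψ(y) = Γ'(y)/Γ(y)`, i.e. the derivative of `log Γ`. -/
noncomputable def digamma (y : ℝ) : ℝ := deriv (fun t : ℝ => Real.log (Real.Gamma t)) y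

/-- The continuous extension of the harmonic numbers: `H(x) = ψ(x+1) + γ`. -/
noncomputable def H (x : ℝ) : ℝ := digamma (x + 1) + Real.eulerMascheroniConstant

lemma diffAt_logGamma {y : ℝ} (hy : 0 < y) :
    DifferentiableAt ℝ (fun t : ℝ => Real.log (Real.Gamma t)) y := by
  have h1 : DifferentiableAt ℝ Real.Gamma y :=
    Real.differentiableAt_Gamma (fun m => by
      have : (0:ℝ) ≤ m := m.cast_nonneg
      nlinarith)
  exact h1.log (Real.Gamma_pos_of_pos hy).ne'

lemma digamma_rec {y : ℝ} (hy : 0 < y) : digamma (y + 1) = digamma y + 1 / y := by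
  have heq : (fun t : ℝ => Real.log (Real.Gamma (t + 1)))
      =ᶠ[nhds y] (fun t : ℝ => Real.log t + Real.log (Real.Gamma t)) := by
    filter_upwards [eventually_gt_nhds hy] with t ht
    rw [Real.Gamma_add_one ht.ne', Real.log_mul ht.ne' (Real.Gamma_pos_of_pos ht).ne']
  have h1 : deriv (fun t : ℝ => Real.log (Real.Gamma (t + 1))) y = digamma (y + 1) := by
    have := ((diffAt_logGamma (by linarith : (0:ℝ) < y + 1)).hasDerivAt.comp y
      ((hasDerivAt_id y).add_const 1))
    simp only [mul_one] at this
    exact this.deriv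
  have h2 : deriv (fun t : ℝ => Real.log t + Real.log (Real.Gamma t)) y
      = 1 / y + digamma y := by
    have this : HasDerivAt (fun t : ℝ => Real.log t + Real.log (Real.Gamma t))
        (y⁻¹ + deriv (fun t : ℝ => Real.log (Real.Gamma t)) y) y :=
      ((Real.hasDerivAt_log hy.ne').add (diffAt_logGamma hy).hasDerivAt)
    rw [this.deriv, one_div]; rfl
  rw [← h1, heq.deriv_eq, h2, add_comm]

lemma digamma_ge_log {y : ℝ} (hy : 0 < y) : Real.log y ≤ digamma (y + 1) := by
  have hmem1 : y ∈ Set.Ioi (0:ℝ) := hy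
  have hmem2 : y + 1 ∈ Set.Ioi (0:ℝ) := by simp; linarith
  have := Real.convexOn_log_Gamma.slope_le_deriv hmem1 hmem2 (by linarith)
    (diffAt_logGamma (by linarith))
  rw [slope_def_field] at this
  simp only [Function.comp] at this
  rw [Real.Gamma_add_one hy.ne', Real.log_mul hy.ne' (Real.Gamma_pos_of_pos hy).ne'] at this
  have harith : (Real.log y + Real.log (Real.Gamma y) - Real.log (Real.Gamma y)) / (y + 1 - y)
      = Real.log y := by ring_nf
  rw [harith] at this
  exact this.trans_eq rfl

theorem exp_H_ge (x : ℝ) (hx : 1 ≤ x) : x + 1 ≤ Real.exp (H x) := by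
  have hx1 : (0:ℝ) < x + 1 := by linarith
  have h1 : Real.log (x + 1) ≤ digamma (x + 1 + 1) := digamma_ge_log hx1
  have h2 : digamma (x + 1 + 1) = digamma (x + 1) + 1 / (x + 1) := digamma_rec hx1
  have h3 : 1 / (x + 1) ≤ 1 / 2 := by
    rw [div_le_div_iff₀ hx1 (by norm_num)]; linarith
  have hγ := Real.one_half_lt_eulerMascheroniConstant
  have hH : Real.log (x + 1) ≤ H x := by
    unfold H
    rw [h2] at h1
    linarith
  calc x + 1 = Real.exp (Real.log (x + 1)) := (Real.exp_log hx1).symm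
    _ ≤ Real.exp (H x) := Real.exp_le_exp.mpr hH
end
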